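/- Let A ∈ ℂ^{n×n} be Hermitian and B ∈ ℂ^{n×n} be Hermitian positive definite. Let ũ ∈ ℂⁿ with ‖ũ‖_B = 1, let λ̃ ∈ ℝ, and let r = Aũ − λ̃Bũ. Then there exists a generalized eigenvalue λ of the pencil (A, B) such that |λ − λ̃| ≤ ‖r‖_{B⁻¹}; i.e., min over the generalized eigenvalues λ_i of |λ_i − λ̃| is at most ‖r‖_{B⁻¹}. -/

import Mathlib

open Matrix ComplexOrder

noncomputable section

/-- Euclidean (ℓ²) norm of a complex vector. -/
def vecNorm2 {m : Type*} [Fintype m] (x : m → ℂ) : ℝ :=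
  Real.sqrt (∑ i, ‖x i‖ ^ 2)

/-- Spectral (ℓ²-operator) norm of a complex matrix. -/
def specNorm {m p : Type*} [Fintype m] [Fintype p] (M : Matrix m p ℂ) : ℝ :=
  sSup {t : ℝ | ∃ x : p → ℂ, x ≠ 0 ∧ t = vecNorm2 (M *ᵥ x) / vecNorm2 x}

/-- The B-inner product ⟨x,y⟩_B = y*Bx. -/
def Binner {m : Type*} [Fintype m] (B : Matrix m m ℂ) (x y : m → ℂ) : ℂ :=
  star y ⬝ᵥ B *ᵥ x

/-- The B-norm of a vector, ‖x‖_B = √(x*Bx). -/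
def vecBnorm {m : Type*} [Fintype m] (B : Matrix m m ℂ) (x : m → ℂ) : ℝ :=
  Real.sqrt (star x ⬝ᵥ B *ᵥ x).re

/-- The induced B-norm of a matrix, ‖M‖_B = sup_{x ≠ 0} ‖Mx‖_B / ‖x‖_B. -/
def matBnorm {m : Type*} [Fintype m] (B M : Matrix m m ℂ) : ℝ :=
  sSup {t : ℝ | ∃ x : m → ℂ, x ≠ 0 ∧ t = vecBnorm B (M *ᵥ x) / vecBnorm B x}


/-! With `S = B^{1/2}` and `v = S ũ`, one has `‖v‖₂ = ‖ũ‖_B = 1`, `‖r‖_{B⁻¹} = ‖S⁻¹ r‖₂` and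
`S⁻¹ r = (G - λ̃) v` for the Hermitian matrix `G = S⁻¹ A S⁻¹`. Writing `v = U c` in a unitary
eigenbasis of `G` gives `‖(G - λ̃) v‖₂² = ∑ᵢ |λᵢ - λ̃|² |cᵢ|² ≥ minᵢ |λᵢ - λ̃|² ‖c‖₂²`, and
`‖c‖₂ = ‖v‖₂ = 1`. -/

namespace Matrix

section

variable {m p α : Type*} [Fintype m] [Fintype p]

lemma star_mulVec_dotProduct [CommSemiring α] [StarRing α] (M : Matrix m p α) (x : p → α)
    (y : m → α) : star (M *ᵥ x) ⬝ᵥ y = star x ⬝ᵥ (Mᴴ *ᵥ y) := by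
  rw [star_mulVec, ← dotProduct_mulVec]

lemma vecNorm2_eq_sqrt_re_star_dotProduct (x : m → ℂ) :
    vecNorm2 x = Real.sqrt (star x ⬝ᵥ x).re := by
  simp only [vecNorm2, dotProduct, Pi.star_apply, RCLike.star_def, Complex.conj_mul',
    Complex.re_sum]
  norm_cast

lemma vecBnorm_eq_vecNorm2_mulVec {B : Matrix m m ℂ} {S : Matrix p m ℂ} (hSB : Sᴴ * S = B)
    (x : m → ℂ) : vecBnorm B x = vecNorm2 (S *ᵥ x) := by
  rw [vecNorm2_eq_sqrt_re_star_dotProduct, star_mulVec_dotProduct, mulVec_mulVec, hSB, vecBnorm]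

lemma vecNorm2_unitary_mulVec [DecidableEq m] {U : Matrix m m ℂ} (hU : U ∈ unitaryGroup m ℂ)
    (x : m → ℂ) : vecNorm2 (U *ᵥ x) = vecNorm2 x := by
  rw [vecNorm2_eq_sqrt_re_star_dotProduct, vecNorm2_eq_sqrt_re_star_dotProduct,
    star_mulVec_dotProduct, mulVec_mulVec, ← star_eq_conjTranspose,
    (mem_unitaryGroup_iff').mp hU, one_mulVec]

lemma mul_vecNorm2_le_vecNorm2_mul {a : ℝ} {d : m → ℂ} (ha : 0 ≤ a) (hd : ∀ j, a ≤ ‖d j‖)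
    (c : m → ℂ) : a * vecNorm2 c ≤ vecNorm2 (fun j ↦ d j * c j) := by
  rw [vecNorm2, vecNorm2, ← Real.sqrt_sq ha, ← Real.sqrt_mul (sq_nonneg a), Finset.mul_sum]
  gcongr with j
  rw [norm_mul, mul_pow]
  gcongr
  exact hd j

lemma inv_mulVec_sub_smul_mul_self_mulVec [DecidableEq m] [CommRing α] (A S : Matrix m m α)
    (hS : IsUnit S.det) (u : m → α) (lam : α) :
    S⁻¹ *ᵥ (A *ᵥ u - lam • ((S * S) *ᵥ u)) = (S⁻¹ * A * S⁻¹) *ᵥ (S *ᵥ u) - lam • (S *ᵥ u) := by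
  rw [mulVec_sub, mulVec_smul, mulVec_mulVec, mulVec_mulVec, mulVec_mulVec, mul_assoc _ S⁻¹,
    nonsing_inv_mul S hS, mul_one, ← mul_assoc, nonsing_inv_mul S hS, one_mul]

end

namespace IsHermitian

variable {m : Type*} [Fintype m] [DecidableEq m] {G : Matrix m m ℂ}

lemma mulVec_sub_smul_eq_eigenvectorUnitary_mulVec (hG : G.IsHermitian) (lam : ℝ)
    (v : m → ℂ) :
    G *ᵥ v - (lam : ℂ) • v = (hG.eigenvectorUnitary : Matrix m m ℂ) *ᵥ fun i ↦
      ((hG.eigenvalues i - lam : ℝ) : ℂ) *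
        (star (hG.eigenvectorUnitary : Matrix m m ℂ) *ᵥ v) i := by
  set U : Matrix m m ℂ := (hG.eigenvectorUnitary : Matrix m m ℂ)
  have hv : v = U *ᵥ (star U *ᵥ v) := by
    rw [mulVec_mulVec, mem_unitaryGroup_iff.mp hG.eigenvectorUnitary.2, one_mulVec]
  have hGv : G *ᵥ v = U *ᵥ (diagonal (RCLike.ofReal ∘ hG.eigenvalues) *ᵥ (star U *ᵥ v)) := by
    conv_lhs => rw [hG.spectral_theorem, Unitary.conjStarAlgAut_apply]
    simp only [U, mulVec_mulVec, mul_assoc]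
  nth_rw 2 [hv]
  rw [hGv, ← mulVec_smul, ← mulVec_sub]
  congr 1
  funext i
  simp only [Pi.sub_apply, Pi.smul_apply, mulVec_diagonal, Function.comp_apply, smul_eq_mul,
    Complex.ofReal_sub, sub_mul]
  rfl

theorem exists_abs_eigenvalues_sub_mul_vecNorm2_le (hG : G.IsHermitian) (lam : ℝ) {v : m → ℂ}
    (hv : v ≠ 0) :
    ∃ i, |hG.eigenvalues i - lam| * vecNorm2 v ≤ vecNorm2 (G *ᵥ v - (lam : ℂ) • v) := by
  obtain ⟨j, -⟩ := Function.ne_iff.mp hv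
  have : Nonempty m := ⟨j⟩
  obtain ⟨i, -, hi⟩ := Finset.exists_min_image Finset.univ
    (fun j ↦ |hG.eigenvalues j - lam|) Finset.univ_nonempty
  refine ⟨i, ?_⟩
  set U := hG.eigenvectorUnitary
  calc |hG.eigenvalues i - lam| * vecNorm2 v
      = |hG.eigenvalues i - lam| * vecNorm2 (star (U : Matrix m m ℂ) *ᵥ v) := by
        rw [vecNorm2_unitary_mulVec (Unitary.star_mem U.2)]
    _ ≤ vecNorm2 fun j ↦
          ((hG.eigenvalues j - lam : ℝ) : ℂ) * (star (U : Matrix m m ℂ) *ᵥ v) j :=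
        mul_vecNorm2_le_vecNorm2_mul (abs_nonneg _)
          (fun j ↦ by rw [Complex.norm_real, Real.norm_eq_abs]; exact hi j (Finset.mem_univ j)) _
    _ = vecNorm2 (G *ᵥ v - (lam : ℂ) • v) := by
        rw [hG.mulVec_sub_smul_eq_eigenvectorUnitary_mulVec, vecNorm2_unitary_mulVec U.2]

end IsHermitian

end Matrix

theorem statement14_general {n : ℕ} (A B S : Matrix (Fin n) (Fin n) ℂ)
    (hS : S.PosDef) (hSS : S * S = B)
    (u : Fin n → ℂ) (hu : vecBnorm B u = 1) (lam : ℝ)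
    (hG : (S⁻¹ * A * S⁻¹).IsHermitian) :
    ∃ i : Fin n, |hG.eigenvalues i - lam| ≤
      vecBnorm B⁻¹ (A *ᵥ u - (lam : ℂ) • (B *ᵥ u)) := by
  have hSdet : IsUnit S.det := (isUnit_iff_isUnit_det S).mp hS.isUnit
  have hSB : Sᴴ * S = B := by rw [hS.isHermitian.eq, hSS]
  have hSBinv : (S⁻¹)ᴴ * S⁻¹ = B⁻¹ := by rw [hS.isHermitian.inv.eq, ← hSS, Matrix.mul_inv_rev]
  have hv : vecNorm2 (S *ᵥ u) = 1 := by rw [← vecBnorm_eq_vecNorm2_mulVec hSB, hu]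
  have hv0 : S *ᵥ u ≠ 0 := fun h ↦ by simp [h, vecNorm2] at hv
  obtain ⟨i, hi⟩ := hG.exists_abs_eigenvalues_sub_mul_vecNorm2_le lam hv0
  refine ⟨i, ?_⟩
  rw [vecBnorm_eq_vecNorm2_mulVec hSBinv, ← hSS, inv_mulVec_sub_smul_mul_self_mulVec A S hSdet]
  simpa [hv] using hi

/-- there is a generalized eigenvalue of the pencil (A,B) (an eigenvalue of
    the Hermitian matrix B^{-1/2}AB^{-1/2}, with S = B^{1/2} the Hermitian positive
    definite square root of B) within ‖r‖_{B⁻¹} of λ̃, where r = Aũ − λ̃Bũ and ‖ũ‖_B = 1. -/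
theorem statement14 {n : ℕ} (A B S : Matrix (Fin n) (Fin n) ℂ)
    (hA : A.IsHermitian) (hB : B.PosDef) (hS : S.PosDef) (hSS : S * S = B)
    (u : Fin n → ℂ) (hu : vecBnorm B u = 1) (lam : ℝ)
    (hG : (S⁻¹ * A * S⁻¹).IsHermitian) :
    ∃ i : Fin n, |hG.eigenvalues i - lam| ≤
      vecBnorm B⁻¹ (A *ᵥ u - (lam : ℂ) • (B *ᵥ u)) :=
  statement14_general A B S hS hSS u hu lam hG
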